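/- Let Θ and X be finite nonempty sets, 𝒜 a nonempty set, ℓ : 𝒜 → ℝ^X a loss, and Φ an entropy on Δ_Θ differentiable on relint(Δ_Θ) whose entropic dual Φ* is differentiable on ℝ^Θ with, for every w ∈ ℝ^Θ, ∇Φ*(w) ∈ relint(Δ_Θ) and Φ*(w) = ⟨∇Φ*(w), w⟩ − Φ(∇Φ*(w)), and with ∇Φ*(∇Φ(μ)) = μ for all μ ∈ relint(Δ_Θ). If ℓ is Φ-mixable, then for every initial μ^0 ∈ relint(Δ_Θ), every T ∈ ℕ, every sequence x^1, …, x^T ∈ X and every A^1, …, A^T ∈ 𝒜^Θ, there exist â^1, …, â^T ∈ 𝒜 such that for every μ' ∈ Δ_Θ: Σ_{t=1}^T ℓ_{x^t}(â^t) ≤ ⟨μ', Σ_{t=1}^T ℓ_{x^t}(A^t)⟩ + D_Φ(μ', μ^0). -/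

import Mathlib

open Finset

/-- The probability simplex on a finite type `Θ`. -/
def probSimplex (Θ : Type*) [Fintype Θ] : Set (Θ → ℝ) :=
  {μ | (∀ θ, 0 ≤ μ θ) ∧ ∑ θ, μ θ = 1}

/-- The relative interior of the probability simplex. -/
def probRelint (Θ : Type*) [Fintype Θ] : Set (Θ → ℝ) :=
  {μ | (∀ θ, 0 < μ θ) ∧ ∑ θ, μ θ = 1}

/-- Standard inner product on `ℝ^Θ`. -/
noncomputable def ip {Θ : Type*} [Fintype Θ] (μ v : Θ → ℝ) : ℝ := ∑ θ, μ θ * v θ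

/-- Entropic dual: `Φ*(v) = sup_{μ ∈ Δ_Θ} ⟨μ, v⟩ - Φ(μ)`. -/
noncomputable def edual {Θ : Type*} [Fintype Θ] (Φ : (Θ → ℝ) → ℝ) (v : Θ → ℝ) : ℝ :=
  sSup ((fun μ => ip μ v - Φ μ) '' probSimplex Θ)

/-- The continuous linear map `v ↦ ⟨w, v⟩` representing a gradient vector `w`. -/
noncomputable def pairCLM {Θ : Type*} [Fintype Θ] (w : Θ → ℝ) : (Θ → ℝ) →L[ℝ] ℝ :=
  ∑ θ, w θ • ContinuousLinearMap.proj θ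

/-- Bregman divergence of `Φ` with gradient map `g`. -/
noncomputable def breg {Θ : Type*} [Fintype Θ] (Φ : (Θ → ℝ) → ℝ)
    (g : (Θ → ℝ) → Θ → ℝ) (μ μ' : Θ → ℝ) : ℝ :=
  Φ μ - Φ μ' - ip (μ - μ') (g μ')

/-!
Run the algorithm in dual coordinates: `W₀ = ∇Φ(μ⁰)`, `W_{t+1} = W_t - ℓ_{x^t}(A^t)`, and
play mixability at `μ^t = ∇Φ*(W_t)`. Since `μ^t` maximises `⟨·, W_t⟩ - Φ` over the simplex at
a relative-interior point, `∇Φ(μ^t)` agrees with `W_t` on tangent directions; testing the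
mixability infimum against `μ^{t+1}` then bounds the `t`-th loss by `Φ*(W_t) - Φ*(W_{t+1})`.
The sum telescopes to `Φ*(∇Φ(μ⁰)) - Φ*(W_T)`, and Fenchel–Young at `μ'` for the last term
together with `Φ*(∇Φ(μ⁰)) = ⟨μ⁰, ∇Φ(μ⁰)⟩ - Φ(μ⁰)` gives the regret bound.
-/

open Topology Filter

/-- `Φ`-mixability of `ℓ`, with `g` standing for `∇Φ` in the Bregman divergence. -/
def IsMixable {Θ X 𝒜 : Type*} [Fintype Θ] (ℓ : 𝒜 → X → ℝ) (Φ : (Θ → ℝ) → ℝ)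
    (g : (Θ → ℝ) → Θ → ℝ) : Prop :=
  ∀ A : Θ → 𝒜, ∀ μ ∈ probRelint Θ, ∃ ahat : 𝒜, ∀ x : X,
    ℓ ahat x ≤ sInf ((fun μ' => ip μ' (fun θ => ℓ (A θ) x) + breg Φ g μ' μ) '' probSimplex Θ)

section

variable {Θ : Type*} [Fintype Θ]

theorem ip_eq_dotProduct (μ v : Θ → ℝ) : ip μ v = μ ⬝ᵥ v := rfl

theorem pairCLM_apply (w v : Θ → ℝ) : pairCLM w v = ip w v := by
  simp [pairCLM, ip]

theorem continuous_ip_left (w : Θ → ℝ) : Continuous fun μ : Θ → ℝ => ip μ w :=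
  continuous_id.dotProduct continuous_const

theorem probRelint_subset_probSimplex : probRelint Θ ⊆ probSimplex Θ :=
  fun _ hμ => ⟨fun θ => (hμ.1 θ).le, hμ.2⟩

theorem isCompact_probSimplex : IsCompact (probSimplex Θ) :=
  isCompact_stdSimplex ℝ Θ

theorem bddBelow_image_probSimplex {Φ f : (Θ → ℝ) → ℝ}
    (hlsc : LowerSemicontinuousOn Φ (probSimplex Θ)) (hf : Continuous fun μ => f μ - Φ μ) :
    BddBelow (f '' probSimplex Θ) := by
  have hlsc_f : LowerSemicontinuousOn (fun μ => Φ μ + (f μ - Φ μ)) (probSimplex Θ) :=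
    hlsc.add hf.continuousOn.lowerSemicontinuousOn
  simpa using hlsc_f.bddBelow_of_isCompact isCompact_probSimplex

theorem ip_sub_le_edual {Φ : (Θ → ℝ) → ℝ} (hlsc : LowerSemicontinuousOn Φ (probSimplex Θ))
    (w : Θ → ℝ) {μ : Θ → ℝ} (hμ : μ ∈ probSimplex Θ) : ip μ w - Φ μ ≤ edual Φ w := by
  obtain ⟨m, hm⟩ := bddBelow_image_probSimplex (f := fun μ => Φ μ - ip μ w) hlsc
    (by simp only [sub_sub_cancel_left]; exact (continuous_ip_left w).neg)
  refine le_csSup ⟨-m, ?_⟩ ⟨μ, hμ, rfl⟩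
  rintro _ ⟨ν, hν, rfl⟩
  linarith [hm ⟨ν, hν, rfl⟩]

theorem eventually_add_smul_mem_probSimplex {μ v : Θ → ℝ} (hμ : μ ∈ probRelint Θ)
    (hv : ∑ θ, v θ = 0) : ∀ᶠ t in 𝓝 (0 : ℝ), μ + t • v ∈ probSimplex Θ := by
  have hpos : ∀ᶠ t in 𝓝 (0 : ℝ), ∀ θ, 0 < μ θ + t * v θ := eventually_all.2 fun θ => by
    have hcont : Continuous fun t : ℝ => μ θ + t * v θ := by fun_prop
    exact hcont.tendsto' 0 (μ θ) (by simp) |>.eventually (lt_mem_nhds (hμ.1 θ))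
  filter_upwards [hpos] with t ht
  refine ⟨fun θ => (ht θ).le, ?_⟩
  simp [Finset.sum_add_distrib, ← Finset.mul_sum, hv, hμ.2]

theorem ip_grad_eq_of_isMaxOn {Φ : (Θ → ℝ) → ℝ} {μ w grad v : Θ → ℝ} (hμ : μ ∈ probRelint Θ)
    (hΦ : HasFDerivAt Φ (pairCLM grad) μ)
    (hmax : IsMaxOn (fun ν => ip ν w - Φ ν) (probSimplex Θ) μ) (hv : ∑ θ, v θ = 0) :
    ip v grad = ip v w := by
  have hip : ∀ ν, ip ν w = pairCLM w ν := fun ν => by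
    rw [pairCLM_apply, ip_eq_dotProduct, ip_eq_dotProduct, dotProduct_comm]
  have hF : HasFDerivAt (fun ν => ip ν w - Φ ν) (pairCLM w - pairCLM grad) μ := by
    simp only [hip]
    exact (pairCLM w).hasFDerivAt.sub hΦ
  have hline : HasDerivAt (fun t : ℝ => μ + t • v) v 0 := by
    simpa using ((hasDerivAt_id (0 : ℝ)).smul_const v).const_add μ
  have hmax_line : IsLocalMax ((fun ν => ip ν w - Φ ν) ∘ fun t : ℝ => μ + t • v) 0 := by
    filter_upwards [eventually_add_smul_mem_probSimplex hμ hv] with t ht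
    simpa using hmax ht
  have hderiv := hmax_line.hasDerivAt_eq_zero (hF.comp_hasDerivAt_of_eq 0 hline (by simp))
  simp only [sub_apply, pairCLM_apply, ip_eq_dotProduct] at hderiv
  rw [ip_eq_dotProduct, ip_eq_dotProduct, dotProduct_comm v, dotProduct_comm v]
  linarith

theorem isMaxOn_of_edual_eq {Φ : (Θ → ℝ) → ℝ} (hlsc : LowerSemicontinuousOn Φ (probSimplex Θ))
    {w μ : Θ → ℝ} (hμ : edual Φ w = ip μ w - Φ μ) :
    IsMaxOn (fun ν => ip ν w - Φ ν) (probSimplex Θ) μ :=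
  fun _ hν => by simpa only [Set.mem_ofPred_eq, ← hμ] using ip_sub_le_edual hlsc w hν

/-- The mixability bound at `∇Φ*(W)`, tested against the next iterate `∇Φ*(W - c)`, is
exactly the decrease of `Φ*`. -/
theorem ip_add_breg_eq_edual_sub {Φ : (Θ → ℝ) → ℝ} {g gs : (Θ → ℝ) → Θ → ℝ}
    (hlsc : LowerSemicontinuousOn Φ (probSimplex Θ))
    (hg : ∀ μ ∈ probRelint Θ, HasFDerivAt Φ (pairCLM (g μ)) μ)
    (hgsmem : ∀ w : Θ → ℝ, gs w ∈ probRelint Θ)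
    (hfenchel : ∀ w : Θ → ℝ, edual Φ w = ip (gs w) w - Φ (gs w)) (W c : Θ → ℝ) :
    ip (gs (W - c)) c + breg Φ g (gs (W - c)) (gs W) = edual Φ W - edual Φ (W - c) := by
  have htangent : ∑ θ, (gs (W - c) - gs W) θ = 0 := by
    simp [Finset.sum_sub_distrib, (hgsmem _).2]
  have hgrad := ip_grad_eq_of_isMaxOn (hgsmem W) (hg _ (hgsmem W))
    (isMaxOn_of_edual_eq hlsc (hfenchel W)) htangent
  rw [breg, hfenchel W, hfenchel (W - c)]
  simp only [ip_eq_dotProduct, sub_dotProduct, dotProduct_sub] at hgrad ⊢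
  linarith

theorem bddBelow_image_ip_add_breg {Φ : (Θ → ℝ) → ℝ}
    (hlsc : LowerSemicontinuousOn Φ (probSimplex Θ)) (g : (Θ → ℝ) → Θ → ℝ) (c μ : Θ → ℝ) :
    BddBelow ((fun μ' => ip μ' c + breg Φ g μ' μ) '' probSimplex Θ) := by
  refine bddBelow_image_probSimplex hlsc ?_
  have hcont : Continuous fun μ' => ip μ' c - Φ μ - ip (μ' - μ) (g μ) := by
    simp only [ip_eq_dotProduct]
    fun_prop
  convert hcont using 2 with μ'
  rw [breg]
  ring

end

section

variable {Θ X 𝒜 : Type*} [Fintype Θ] {ℓ : 𝒜 → X → ℝ} {Φ : (Θ → ℝ) → ℝ}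
  {g gs : (Θ → ℝ) → Θ → ℝ}

theorem exists_loss_le_edual_sub (hlsc : LowerSemicontinuousOn Φ (probSimplex Θ))
    (hg : ∀ μ ∈ probRelint Θ, HasFDerivAt Φ (pairCLM (g μ)) μ)
    (hgsmem : ∀ w : Θ → ℝ, gs w ∈ probRelint Θ)
    (hfenchel : ∀ w : Θ → ℝ, edual Φ w = ip (gs w) w - Φ (gs w))
    (hmix : IsMixable ℓ Φ g) (A : Θ → 𝒜) (W : Θ → ℝ) :
    ∃ a : 𝒜, ∀ x : X, ℓ a x ≤ edual Φ W - edual Φ (W - fun θ => ℓ (A θ) x) := by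
  obtain ⟨a, ha⟩ := hmix A (gs W) (hgsmem W)
  refine ⟨a, fun x => (ha x).trans ?_⟩
  rw [← ip_add_breg_eq_edual_sub hlsc hg hgsmem hfenchel]
  exact csInf_le (bddBelow_image_ip_add_breg hlsc g _ _)
    ⟨_, probRelint_subset_probSimplex (hgsmem _), rfl⟩

theorem exists_sum_loss_le_edual_sub (hlsc : LowerSemicontinuousOn Φ (probSimplex Θ))
    (hg : ∀ μ ∈ probRelint Θ, HasFDerivAt Φ (pairCLM (g μ)) μ)
    (hgsmem : ∀ w : Θ → ℝ, gs w ∈ probRelint Θ)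
    (hfenchel : ∀ w : Θ → ℝ, edual Φ w = ip (gs w) w - Φ (gs w))
    (hmix : IsMixable ℓ Φ g) (T : ℕ) (x : Fin T → X) (A : Fin T → Θ → 𝒜) (W : Θ → ℝ) :
    ∃ ahat : Fin T → 𝒜, ∑ t, ℓ (ahat t) (x t)
      ≤ edual Φ W - edual Φ (W - fun θ => ∑ t, ℓ (A t θ) (x t)) := by
  induction T generalizing W with
  | zero => exact ⟨finZeroElim, by simp [show (fun _ : Θ => (0 : ℝ)) = 0 from rfl]⟩
  | succ T ih =>
    obtain ⟨a, ha⟩ := exists_loss_le_edual_sub hlsc hg hgsmem hfenchel hmix (A 0) W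
    obtain ⟨ahat, hahat⟩ :=
      ih (fun t => x t.succ) (fun t => A t.succ) (W - fun θ => ℓ (A 0 θ) (x 0))
    refine ⟨Fin.cons a ahat, ?_⟩
    have hW : (W - fun θ => ∑ t, ℓ (A t θ) (x t))
        = (W - fun θ => ℓ (A 0 θ) (x 0)) - fun θ => ∑ t : Fin T, ℓ (A t.succ θ) (x t.succ) := by
      funext θ
      simp only [Pi.sub_apply, Fin.sum_univ_succ]
      ring
    rw [Fin.sum_univ_succ, hW]
    simp only [Fin.cons_zero, Fin.cons_succ]
    linarith [ha (x 0)]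

end

theorem stmt_9_general {Θ X 𝒜 : Type*} [Fintype Θ]
    (ℓ : 𝒜 → X → ℝ)
    (Φ : (Θ → ℝ) → ℝ)
    (hlsc : LowerSemicontinuousOn Φ (probSimplex Θ))
    (g gs : (Θ → ℝ) → Θ → ℝ)
    (hg : ∀ μ ∈ probRelint Θ, HasFDerivAt Φ (pairCLM (g μ)) μ)
    (hgsmem : ∀ w : Θ → ℝ, gs w ∈ probRelint Θ)
    (hfenchel : ∀ w : Θ → ℝ, edual Φ w = ip (gs w) w - Φ (gs w))
    (hinv : ∀ μ ∈ probRelint Θ, gs (g μ) = μ)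
    (hmix : ∀ A : Θ → 𝒜, ∀ μ ∈ probRelint Θ, ∃ ahat : 𝒜, ∀ x : X,
      ℓ ahat x ≤ sInf ((fun μ' => ip μ' (fun θ => ℓ (A θ) x) + breg Φ g μ' μ) ''
        probSimplex Θ))
    (μ0 : Θ → ℝ) (hμ0 : μ0 ∈ probRelint Θ)
    (T : ℕ) (x : Fin T → X) (A : Fin T → Θ → 𝒜) :
    ∃ ahat : Fin T → 𝒜, ∀ μ' ∈ probSimplex Θ,
      ∑ t, ℓ (ahat t) (x t)
        ≤ ip μ' (fun θ => ∑ t, ℓ (A t θ) (x t)) + breg Φ g μ' μ0 := by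
  obtain ⟨ahat, hahat⟩ :=
    exists_sum_loss_le_edual_sub hlsc hg hgsmem hfenchel hmix T x A (g μ0)
  refine ⟨ahat, fun μ' hμ' => ?_⟩
  have hstart : edual Φ (g μ0) = ip μ0 (g μ0) - Φ μ0 := by rw [hfenchel, hinv μ0 hμ0]
  have hend := ip_sub_le_edual hlsc (g μ0 - fun θ => ∑ t, ℓ (A t θ) (x t)) hμ'
  simp only [breg, ip_eq_dotProduct, sub_dotProduct, dotProduct_sub] at hstart hend hahat ⊢
  linarith

/-- Φ-mixability implies the regret bound against every mixture `μ'` over experts. -/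
theorem stmt_9 {Θ X 𝒜 : Type*} [Fintype Θ] [Nonempty Θ] [Fintype X] [Nonempty X]
    [Nonempty 𝒜]
    (ℓ : 𝒜 → X → ℝ)
    (Φ : (Θ → ℝ) → ℝ)
    (hconv : ConvexOn ℝ (probSimplex Θ) Φ)
    (hlsc : LowerSemicontinuousOn Φ (probSimplex Θ))
    (g gs : (Θ → ℝ) → Θ → ℝ)
    (hg : ∀ μ ∈ probRelint Θ, HasFDerivAt Φ (pairCLM (g μ)) μ)
    (hgs : ∀ w : Θ → ℝ, HasFDerivAt (edual Φ) (pairCLM (gs w)) w)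
    (hgsmem : ∀ w : Θ → ℝ, gs w ∈ probRelint Θ)
    (hfenchel : ∀ w : Θ → ℝ, edual Φ w = ip (gs w) w - Φ (gs w))
    (hinv : ∀ μ ∈ probRelint Θ, gs (g μ) = μ)
    (hmix : ∀ A : Θ → 𝒜, ∀ μ ∈ probRelint Θ, ∃ ahat : 𝒜, ∀ x : X,
      ℓ ahat x ≤ sInf ((fun μ' => ip μ' (fun θ => ℓ (A θ) x) + breg Φ g μ' μ) ''
        probSimplex Θ))
    (μ0 : Θ → ℝ) (hμ0 : μ0 ∈ probRelint Θ)
    (T : ℕ) (x : Fin T → X) (A : Fin T → Θ → 𝒜) :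
    ∃ ahat : Fin T → 𝒜, ∀ μ' ∈ probSimplex Θ,
      ∑ t, ℓ (ahat t) (x t)
        ≤ ip μ' (fun θ => ∑ t, ℓ (A t θ) (x t)) + breg Φ g μ' μ0 :=
  stmt_9_general ℓ Φ hlsc g gs hg hgsmem hfenchel hinv hmix μ0 hμ0 T x A
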